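/- A minimal crucial word with respect to the set S_2^n of abelian squares over an n-letter alphabet (n ≥ 4) cannot contain three distinct letters each of which occurs exactly twice in the word. -/

import Mathlib

/-- A word over `Fin n` is free from abelian squares if no factor is a
concatenation of two nonempty words with the same content vector. -/
def AbSqFree {n : ℕ} (w : List (Fin n)) : Prop :=
  ∀ X Y : List (Fin n), X ≠ [] → Y ≠ [] → (∀ c : Fin n, X.count c = Y.count c) →
    ¬ (X ++ Y) <:+: w

/-- A word is crucial w.r.t. the set of abelian squares if it is free from
abelian squares but appending any letter creates an abelian square factor. -/
def CrucialAb {n : ℕ} (w : List (Fin n)) : Prop :=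
  AbSqFree w ∧
  ∀ a : Fin n, ∃ X Y : List (Fin n), X ≠ [] ∧ Y ≠ [] ∧
    (∀ c : Fin n, X.count c = Y.count c) ∧ (X ++ Y) <:+: (w ++ [a])

/-!
Cruciality gives, for every letter `p`, a suffix `X Z` of `w` whose completion `X Z p` is an
abelian square, i.e. `X` has the content of `Z` plus one `p`. The longest of these suffixes is
itself crucial, so by minimality `w = X Z` with `X ~ q Z` for some letter `q`; hence each letter
occurring twice in `w` occurs exactly once in `Z`.

In a suffix `T_p` completing to an abelian square with `p`, the letter `p` occurs an odd number
of times and every other letter an even number of times. Order three doubled letters `a, b, c`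
so that `T_a ⊆ T_b ⊆ T_c` as suffixes. Then `T_b` contains `a` twice (it contains `T_a`, where
`a` occurs once) and `c` not at all (it lies in `T_c`, where `c` occurs once). The suffix `Z`
contains `a` and `c` once each, so it can neither contain `T_b` nor lie inside it.
-/

open List

theorem mem_uIcc_or_mem_uIcc_or_mem_uIcc {β : Type*} [LinearOrder β] (u v w : β) :
    v ∈ Set.uIcc u w ∨ u ∈ Set.uIcc v w ∨ w ∈ Set.uIcc u v := by
  simp only [Set.mem_uIcc]
  rcases le_total u v with h₁ | h₁ <;> rcases le_total v w with h₂ | h₂ <;>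
    rcases le_total u w with h₃ | h₃ <;> tauto

section Counting

variable {α : Type*} [DecidableEq α]

/-- `T ++ [p]` is an abelian square `X ++ (Z ++ [p])`. -/
def CompletesToAbSq (p : α) (T : List α) : Prop :=
  ∃ X Z : List α, X ~ p :: Z ∧ T = X ++ Z

theorem count_append_of_perm_cons {X Z : List α} {p : α} (h : X ~ p :: Z) (c : α) :
    (X ++ Z).count c = 2 * Z.count c + if p = c then 1 else 0 := by
  simp only [count_append, h.count_eq, count_cons, beq_iff_eq]
  ring

theorem count_eq_one_of_perm_cons {X Z : List α} {p c : α} (h : X ~ p :: Z)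
    (hc : (X ++ Z).count c = 2) : Z.count c = 1 := by
  have := count_append_of_perm_cons h c
  split_ifs at this <;> omega

namespace CompletesToAbSq

variable {p c : α} {T : List α}

theorem odd_count_self (h : CompletesToAbSq p T) : Odd (T.count p) := by
  obtain ⟨X, Z, hperm, rfl⟩ := h
  rw [count_append_of_perm_cons hperm, if_pos rfl]
  exact odd_two_mul_add_one _

theorem even_count_of_ne (h : CompletesToAbSq p T) (hc : p ≠ c) : Even (T.count c) := by
  obtain ⟨X, Z, hperm, rfl⟩ := h
  rw [count_append_of_perm_cons hperm, if_neg hc, add_zero]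
  exact even_two_mul _

end CompletesToAbSq

theorem two_le_count_of_sublist {Ta Tb : List α} {a b : α} (hab : a ≠ b)
    (ha : CompletesToAbSq a Ta) (hb : CompletesToAbSq b Tb) (h : Ta <+ Tb) :
    2 ≤ Tb.count a := by
  have hpos := ha.odd_count_self.pos
  have hle := h.count_le a
  obtain ⟨k, hk⟩ := hb.even_count_of_ne hab.symm
  omega

theorem count_eq_zero_of_sublist {Tb Tc : List α} {b c : α} (hcb : c ≠ b)
    (hb : CompletesToAbSq b Tb) (hc : CompletesToAbSq c Tc) (h : Tb <+ Tc)
    (hc₂ : Tc.count c ≤ 2) : Tb.count c = 0 := by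
  obtain ⟨k, hk⟩ := hc.odd_count_self
  have hle := h.count_le c
  obtain ⟨l, hl⟩ := hb.even_count_of_ne hcb.symm
  omega

theorem false_of_suffix_chain {w Z Ta Tb Tc : List α} {a b c : α} (hab : a ≠ b) (hcb : c ≠ b)
    (ha : CompletesToAbSq a Ta) (hb : CompletesToAbSq b Tb) (hc : CompletesToAbSq c Tc)
    (hTaTb : Ta <:+ Tb) (hTbTc : Tb <:+ Tc) (hTcw : Tc <:+ w) (hc₂ : w.count c ≤ 2)
    (hZw : Z <:+ w) (hZa : Z.count a = 1) (hZc : Z.count c = 1) : False := by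
  have hTba := two_le_count_of_sublist hab ha hb hTaTb.sublist
  have hTbc := count_eq_zero_of_sublist hcb hb hc hTbTc.sublist
    ((hTcw.sublist.count_le c).trans hc₂)
  rcases suffix_or_suffix_of_suffix hZw (hTbTc.trans hTcw) with hZTb | hTbZ
  · have := hZTb.sublist.count_le c
    omega
  · have := hTbZ.sublist.count_le a
    omega

end Counting

section Crucial

variable {n : ℕ}

theorem AbSqFree.of_infix {v w : List (Fin n)} (hw : AbSqFree w) (h : v <:+: w) :
    AbSqFree v :=
  fun X Y hX hY hXY hv => hw X Y hX hY hXY (hv.trans h)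

theorem crucialAb_iff {w : List (Fin n)} :
    CrucialAb w ↔ AbSqFree w ∧ ∀ p, ∃ T, T <:+ w ∧ CompletesToAbSq p T := by
  refine and_congr_right fun hfree => forall_congr' fun p => ⟨?_, ?_⟩
  · rintro ⟨X, Y, hX, hY, hXY, hinf⟩
    rcases infix_concat_iff.1 hinf with hsuf | hinf
    · obtain hnil | ⟨t, ht, htw⟩ := suffix_concat_iff.1 hsuf
      · exact absurd (append_eq_nil_iff.1 hnil).1 hX
      obtain ⟨Z, d, rfl⟩ := (eq_nil_or_concat' Y).resolve_left hY
      rw [← append_assoc] at ht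
      obtain ⟨rfl, hd⟩ := append_inj' ht rfl
      cases hd
      exact ⟨X ++ Z, htw, X, Z, (perm_iff_count.2 hXY).trans (perm_append_singleton p Z), rfl⟩
    · exact absurd hinf (hfree X Y hX hY hXY)
  · rintro ⟨_, hT, X, Z, hperm, rfl⟩
    refine ⟨X, Z ++ [p], ?_, by simp, ?_, ?_⟩
    · exact ne_nil_of_length_pos (by simp [hperm.length_eq])
    · exact perm_iff_count.1 (hperm.trans (perm_append_singleton p Z).symm)
    · obtain ⟨s, rfl⟩ := hT
      exact ⟨s, [], by simp⟩

theorem CrucialAb.exists_completesToAbSq_of_minimal [NeZero n] {w : List (Fin n)}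
    (hw : CrucialAb w) (hmin : ∀ v : List (Fin n), CrucialAb v → w.length ≤ v.length) :
    ∃ q, CompletesToAbSq q w := by
  obtain ⟨hfree, hT⟩ := crucialAb_iff.1 hw
  choose T hTw hT using hT
  obtain ⟨q, -, hq⟩ :=
    Finset.exists_max_image Finset.univ (fun p => (T p).length) Finset.univ_nonempty
  have hcrucial : CrucialAb (T q) := crucialAb_iff.2 ⟨hfree.of_infix (hTw q).isInfix,
    fun p => ⟨T p, suffix_of_suffix_length_le (hTw p) (hTw q) (hq p (Finset.mem_univ p)), hT p⟩⟩
  have hwq : T q = w := (hTw q).eq_of_length (le_antisymm (hTw q).length_le (hmin _ hcrucial))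
  exact ⟨q, hwq ▸ hT q⟩

end Crucial

theorem minimal_crucial_no_three_double_letters_general (n : ℕ)
    (w : List (Fin n)) (hw : CrucialAb w)
    (hmin : ∀ v : List (Fin n), CrucialAb v → w.length ≤ v.length) :
    ¬ ∃ x y z : Fin n, x ≠ y ∧ x ≠ z ∧ y ≠ z ∧
      w.count x = 2 ∧ w.count y = 2 ∧ w.count z = 2 := by
  rintro ⟨x, y, z, hxy, hxz, hyz, hx, hy, hz⟩
  have : NeZero n := NeZero.of_pos x.pos
  choose T hTw hT using (crucialAb_iff.1 hw).2
  obtain ⟨q, X, Z, hperm, rfl⟩ := hw.exists_completesToAbSq_of_minimal hmin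
  have chain {a b c} (hab : a ≠ b) (hcb : c ≠ b) (ha : (X ++ Z).count a = 2)
      (hc : (X ++ Z).count c = 2) (h₁ : (T a).length ≤ (T b).length)
      (h₂ : (T b).length ≤ (T c).length) : False :=
    false_of_suffix_chain hab hcb (hT a) (hT b) (hT c)
      (suffix_of_suffix_length_le (hTw a) (hTw b) h₁)
      (suffix_of_suffix_length_le (hTw b) (hTw c) h₂) (hTw c) hc.le (suffix_append X Z)
      (count_eq_one_of_perm_cons hperm ha) (count_eq_one_of_perm_cons hperm hc)
  have between {a b c} (hab : a ≠ b) (hcb : c ≠ b) (ha : (X ++ Z).count a = 2)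
      (hc : (X ++ Z).count c = 2) (h : (T b).length ∈ Set.uIcc (T a).length (T c).length) :
      False :=
    (Set.mem_uIcc.1 h).elim (fun h => chain hab hcb ha hc h.1 h.2)
      (fun h => chain hcb hab hc ha h.1 h.2)
  rcases mem_uIcc_or_mem_uIcc_or_mem_uIcc (T x).length (T y).length (T z).length
    with h | h | h
  · exact between hxy hyz.symm hx hz h
  · exact between hxy.symm hxz.symm hy hz h
  · exact between hxz hyz hx hy h

/-- A minimal crucial word w.r.t. the set of abelian squares over an `n`-letter
alphabet (`n ≥ 4`) cannot contain three distinct letters, each occurring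
exactly twice in the word. -/
theorem minimal_crucial_no_three_double_letters (n : ℕ) (hn : 4 ≤ n)
    (w : List (Fin n)) (hw : CrucialAb w)
    (hmin : ∀ v : List (Fin n), CrucialAb v → w.length ≤ v.length) :
    ¬ ∃ x y z : Fin n, x ≠ y ∧ x ≠ z ∧ y ≠ z ∧
      w.count x = 2 ∧ w.count y = 2 ∧ w.count z = 2 :=
  minimal_crucial_no_three_double_letters_general n w hw hmin
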